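/- For real symmetric positive semidefinite n×n matrices A and B, one has Tr(A) + Tr(B) − 2·Tr((A^{1/2} · B · A^{1/2})^{1/2}) ≥ 0, where M^{1/2} denotes the (unique) positive semidefinite square root of a positive semidefinite matrix M. (This is the nonnegativity of the Bures/Wasserstein term appearing in the closed-form 2-Wasserstein distance between Gaussian distributions.) -/

import Mathlib

open Matrix

section
open scoped ComplexOrder

noncomputable def Matrix.PosSemidef.sqrt {n 𝕜 : Type*} [Fintype n] [DecidableEq n] [RCLike 𝕜]
    {A : Matrix n n 𝕜} (hA : A.PosSemidef) : Matrix n n 𝕜 :=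
  hA.1.eigenvectorUnitary.1 * diagonal ((↑) ∘ (√·) ∘ hA.1.eigenvalues) *
  (star hA.1.eigenvectorUnitary : Matrix n n 𝕜)

end

/-- If `A` and `B` are positive semidefinite, then so is `A^{1/2} * B * A^{1/2}`. -/
lemma sandwich_posSemidef {n : ℕ} {A B : Matrix (Fin n) (Fin n) ℝ}
    (hA : A.PosSemidef) (hB : B.PosSemidef) :
    (hA.sqrt * B * hA.sqrt).PosSemidef := by
  have h := hB.mul_mul_conjTranspose_same hA.sqrt
  have hs : hA.sqrtᴴ = hA.sqrt := by
    rw [Matrix.PosSemidef.sqrt, Matrix.conjTranspose_mul, Matrix.conjTranspose_mul,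
      Matrix.diagonal_conjTranspose, Matrix.star_eq_conjTranspose,
      Matrix.conjTranspose_conjTranspose, Matrix.mul_assoc]
    simp only [star_trivial]
  rwa [hs] at h

lemma psd_sqrt_eq {n : ℕ} {A : Matrix (Fin n) (Fin n) ℝ} (hA : A.PosSemidef) :
    hA.sqrt = (hA.1.eigenvectorUnitary : Matrix (Fin n) (Fin n) ℝ) *
      diagonal (fun i => Real.sqrt (hA.1.eigenvalues i)) *
      (hA.1.eigenvectorUnitary : Matrix (Fin n) (Fin n) ℝ)ᴴ := by
  rfl

lemma psd_sqrt_posSemidef {n : ℕ} {A : Matrix (Fin n) (Fin n) ℝ} (hA : A.PosSemidef) :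
    hA.sqrt.PosSemidef := by
  rw [psd_sqrt_eq]
  exact (PosSemidef.diagonal (fun i => Real.sqrt_nonneg _)).mul_mul_conjTranspose_same _

lemma psd_sqrt_mul_self {n : ℕ} {A : Matrix (Fin n) (Fin n) ℝ} (hA : A.PosSemidef) :
    hA.sqrt * hA.sqrt = A := by
  set U : Matrix (Fin n) (Fin n) ℝ := ↑hA.1.eigenvectorUnitary with hU
  have hU1 : Uᴴ * U = 1 := by
    simpa [star_eq_conjTranspose] using mem_unitaryGroup_iff'.mp (hA.1.eigenvectorUnitary).2
  have hspec := hA.1.spectral_theorem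
  rw [Unitary.conjStarAlgAut_apply, star_eq_conjTranspose] at hspec
  rw [psd_sqrt_eq]
  calc U * diagonal (fun i => Real.sqrt (hA.1.eigenvalues i)) * Uᴴ *
        (U * diagonal (fun i => Real.sqrt (hA.1.eigenvalues i)) * Uᴴ)
      = U * (diagonal (fun i => Real.sqrt (hA.1.eigenvalues i)) * (Uᴴ * U) *
        diagonal (fun i => Real.sqrt (hA.1.eigenvalues i))) * Uᴴ := by
        simp only [Matrix.mul_assoc]
    _ = U * diagonal (RCLike.ofReal ∘ hA.1.eigenvalues) * Uᴴ := by
        rw [hU1, Matrix.mul_one, diagonal_mul_diagonal]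
        congr 2
        congr 1
        funext i
        simp [Real.mul_self_sqrt (hA.eigenvalues_nonneg i)]
    _ = A := hspec.symm

lemma psd_trace_nonneg {n : ℕ} {M : Matrix (Fin n) (Fin n) ℝ} (hM : M.PosSemidef) :
    0 ≤ M.trace := by
  exact hM.trace_nonneg

lemma psd_trace_mul_nonneg {n : ℕ} {M N : Matrix (Fin n) (Fin n) ℝ}
    (hM : M.PosSemidef) (hN : N.PosSemidef) : 0 ≤ (M * N).trace := by
  obtain ⟨C, rfl⟩ : ∃ C : Matrix (Fin n) (Fin n) ℝ, M = Cᴴ * C :=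
    ⟨hM.sqrt, by rw [(psd_sqrt_posSemidef hM).isHermitian.eq, psd_sqrt_mul_self hM]⟩
  rw [Matrix.mul_assoc, Matrix.trace_mul_comm]
  exact psd_trace_nonneg (hN.mul_mul_conjTranspose_same C)

theorem bures_aux {n : ℕ} (A B : Matrix (Fin n) (Fin n) ℝ)
    (hA : A.PosSemidef) (hB : B.PosSemidef)
    (hS : (hA.sqrt * B * hA.sqrt).PosSemidef) :
    0 ≤ A.trace + B.trace - 2 * (hS.sqrt).trace := by
  classical
  set X := hA.sqrt with hXdef
  set Y := hB.sqrt with hYdef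
  have hXh : Xᴴ = X := (psd_sqrt_posSemidef hA).isHermitian
  have hYh : Yᴴ = Y := (psd_sqrt_posSemidef hB).isHermitian
  have hXX : X * X = A := psd_sqrt_mul_self hA
  have hYY : Y * Y = B := psd_sqrt_mul_self hB
  set lam := hS.1.eigenvalues with hlam
  set V : Matrix (Fin n) (Fin n) ℝ := ↑hS.1.eigenvectorUnitary with hVdef
  have hlam0 : ∀ i, 0 ≤ lam i := hS.eigenvalues_nonneg
  have hV1 : Vᴴ * V = 1 := by
    simpa [star_eq_conjTranspose] using mem_unitaryGroup_iff'.mp (hS.1.eigenvectorUnitary).2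
  have hV2 : V * Vᴴ = 1 := by
    simpa [star_eq_conjTranspose] using mem_unitaryGroup_iff.mp (hS.1.eigenvectorUnitary).2
  set D : Matrix (Fin n) (Fin n) ℝ := diagonal lam with hDdef
  have hofReal : (RCLike.ofReal ∘ lam : Fin n → ℝ) = lam := by
    funext i; simp
  have hspec : X * B * X = V * D * Vᴴ := by
    have := hS.1.spectral_theorem
    rwa [Unitary.conjStarAlgAut_apply, hofReal, star_eq_conjTranspose] at this
  -- pseudo inverse square root diagonal
  set g : Fin n → ℝ := fun i => if lam i = 0 then 0 else (Real.sqrt (lam i))⁻¹ with hgdef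
  set G : Matrix (Fin n) (Fin n) ℝ := diagonal g with hGdef
  have hGh : Gᴴ = G := by
    rw [hGdef, diagonal_conjTranspose]
    congr 1
  have hglam : ∀ i, g i * lam i = Real.sqrt (lam i) := by
    intro i
    by_cases h : lam i = 0
    · simp [hgdef, h]
    · have hs := Real.mul_self_sqrt (hlam0 i)
      have hs0 : Real.sqrt (lam i) ≠ 0 := fun h0 => h (by rw [← hs, h0, mul_zero])
      simp only [hgdef, if_neg h]
      field_simp
      rw [sq, hs]
  set e : Fin n → ℝ := fun i => if lam i = 0 then 0 else 1 with hedef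
  have hfe : (fun i => g i * (lam i * g i)) = e := by
    funext i
    simp only [hgdef, hedef]
    by_cases h : lam i = 0
    · simp [h]
    · have hs := Real.mul_self_sqrt (hlam0 i)
      have hs0 : Real.sqrt (lam i) ≠ 0 := fun h0 => h (by rw [← hs, h0, mul_zero])
      simp only [if_neg h]
      field_simp
      rw [sq, hs]
  have hfg : (fun i => g i * e i) = g := by
    funext i
    simp only [hgdef, hedef]
    by_cases h : lam i = 0 <;> simp [h]
  have hGDG : G * (D * G) = diagonal e := by
    rw [hGdef, hDdef, diagonal_mul_diagonal, diagonal_mul_diagonal, hfe]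
  have hGE : G * diagonal e = G := by
    rw [hGdef, diagonal_mul_diagonal, hfg]
  -- the W matrix
  set W : Matrix (Fin n) (Fin n) ℝ := Y * (X * (V * G)) with hWdef
  have hWh : Wᴴ = G * (Vᴴ * (X * Y)) := by
    rw [hWdef, conjTranspose_mul, conjTranspose_mul, conjTranspose_mul, hXh, hYh, hGh]
    simp only [Matrix.mul_assoc]
  -- key spectral facts
  have hSV : X * (Y * (Y * (X * V))) = V * D := by
    have h1 : X * (Y * (Y * (X * V))) = (X * B * X) * V := by
      rw [← hYY]; simp only [Matrix.mul_assoc]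
    rw [h1, hspec]
    simp only [Matrix.mul_assoc, hV1, Matrix.mul_one]
  have hSVG : X * (Y * (Y * (X * (V * G)))) = V * (D * G) := by
    have h1 : X * (Y * (Y * (X * (V * G)))) = (X * (Y * (Y * (X * V)))) * G := by
      simp only [Matrix.mul_assoc]
    rw [h1, hSV, Matrix.mul_assoc]
  -- cross term
  have hcross : Wᴴ * (Y * (X * V)) = G * D := by
    have h1 : Wᴴ * (Y * (X * V)) = G * (Vᴴ * (X * (Y * (Y * (X * V))))) := by
      rw [hWh]; simp only [Matrix.mul_assoc]
    rw [h1, hSV, ← Matrix.mul_assoc Vᴴ V D, hV1, Matrix.one_mul]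
  -- W^H W
  have hWW : Wᴴ * W = diagonal e := by
    have h1 : Wᴴ * W = G * (Vᴴ * (X * (Y * (Y * (X * (V * G)))))) := by
      rw [hWh, hWdef]; simp only [Matrix.mul_assoc]
    rw [h1, hSVG, ← Matrix.mul_assoc Vᴴ V (D * G), hV1, Matrix.one_mul, hGDG]
  -- projection
  set P : Matrix (Fin n) (Fin n) ℝ := W * Wᴴ with hPdef
  have hPh : Pᴴ = P := by simp [hPdef, conjTranspose_mul]
  have hWE : W * diagonal e = W := by
    have h1 : W * diagonal e = Y * (X * (V * (G * diagonal e))) := by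
      rw [hWdef]; simp only [Matrix.mul_assoc]
    rw [h1, hGE, ← hWdef]
  have hPP : P * P = P := by
    calc P * P = W * (Wᴴ * W) * Wᴴ := by simp only [hPdef, Matrix.mul_assoc]
      _ = W * Wᴴ := by rw [hWW, hWE]
  have hQ : (1 - P).PosSemidef := by
    have h2 : (1 - P) * (1 - P) = 1 - P - P + P * P := by noncomm_ring
    have h1 : ((1 - P)ᴴ * (1 - P)) = 1 - P := by
      rw [conjTranspose_sub, conjTranspose_one, hPh, h2, hPP]
      abel
    have := posSemidef_conjTranspose_mul_self (1 - P)
    rwa [h1] at this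
  -- trace of the square root
  set t := ∑ i, Real.sqrt (lam i) with htdef
  have hsq : hS.sqrt = V * diagonal (fun i => Real.sqrt (lam i)) * Vᴴ := by
    rw [Matrix.PosSemidef.sqrt]
    congr 1
  have htr : (hS.sqrt).trace = t := by
    rw [hsq, Matrix.trace_mul_cycle, hV1, Matrix.one_mul, Matrix.trace_diagonal]
  have htGD : (G * D).trace = t := by
    rw [hGdef, hDdef, diagonal_mul_diagonal, Matrix.trace_diagonal]
    exact Finset.sum_congr rfl fun i _ => hglam i
  -- trace identities
  have hc1 : ((Y * W)ᴴ * (X * V)).trace = t := by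
    have h1 : (Y * W)ᴴ * (X * V) = Wᴴ * (Y * (X * V)) := by
      rw [conjTranspose_mul, hYh]; simp only [Matrix.mul_assoc]
    rw [h1, hcross, htGD]
  have hc2 : ((X * V)ᴴ * (Y * W)).trace = t := by
    calc ((X * V)ᴴ * (Y * W)).trace
        = (((Y * W)ᴴ * (X * V))ᴴ).trace := by
          simp only [conjTranspose_mul, conjTranspose_conjTranspose]
      _ = ((Y * W)ᴴ * (X * V)).trace := by
          rw [Matrix.trace_conjTranspose, star_trivial]
      _ = t := hc1
  have ha : ((X * V)ᴴ * (X * V)).trace = A.trace := by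
    have h1 : (X * V)ᴴ * (X * V) = Vᴴ * (A * V) := by
      rw [conjTranspose_mul, hXh]
      calc Vᴴ * X * (X * V) = Vᴴ * ((X * X) * V) := by simp only [Matrix.mul_assoc]
        _ = Vᴴ * (A * V) := by rw [hXX]
    rw [h1, Matrix.trace_mul_comm, Matrix.mul_assoc, hV2, Matrix.mul_one]
  have hb : ((Y * W)ᴴ * (Y * W)).trace = (B * P).trace := by
    have h1 : (Y * W)ᴴ * (Y * W) = Wᴴ * (B * W) := by
      rw [conjTranspose_mul, hYh]
      calc Wᴴ * Y * (Y * W) = Wᴴ * ((Y * Y) * W) := by simp only [Matrix.mul_assoc]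
        _ = Wᴴ * (B * W) := by rw [hYY]
    rw [h1, Matrix.trace_mul_comm, Matrix.mul_assoc, ← hPdef]
  -- main inequality
  have hM : (0:ℝ) ≤ (((X * V) - (Y * W))ᴴ * ((X * V) - (Y * W))).trace :=
    psd_trace_nonneg (posSemidef_conjTranspose_mul_self _)
  have hexp : (((X * V) - (Y * W))ᴴ * ((X * V) - (Y * W))).trace
      = A.trace + (B * P).trace - 2 * t := by
    rw [conjTranspose_sub, Matrix.sub_mul, Matrix.mul_sub, Matrix.mul_sub,
      Matrix.trace_sub, Matrix.trace_sub, Matrix.trace_sub, ha, hb, hc1, hc2]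
    ring
  have hBP : (B * P).trace ≤ B.trace := by
    have h0 : 0 ≤ (B * (1 - P)).trace := psd_trace_mul_nonneg hB hQ
    have h1 : B * (1 - P) = B - B * P := by rw [Matrix.mul_sub, Matrix.mul_one]
    rw [h1, Matrix.trace_sub] at h0
    linarith
  rw [hexp] at hM
  rw [htr]
  linarith

/-- Nonnegativity of the Bures/Wasserstein term:
`Tr(A) + Tr(B) − 2·Tr((A^{1/2} · B · A^{1/2})^{1/2}) ≥ 0`. -/
theorem bures_term_nonneg {n : ℕ} (A B : Matrix (Fin n) (Fin n) ℝ)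
    (hA : A.PosSemidef) (hB : B.PosSemidef) :
    0 ≤ A.trace + B.trace - 2 * ((sandwich_posSemidef hA hB).sqrt).trace :=
  bures_aux A B hA hB (sandwich_posSemidef hA hB)
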